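/- arXiv:2605.16782 — 5 statements merged into one kernel-verified Lean document; each statement's English description precedes it below -/
import Mathlib

section
/- If a real symmetric 2×2 matrix Y and real 2×2 matrix X satisfy the complex matrix inequality Y + iΩ ≥ iXΩXᵀ (as Hermitian matrices), then Y is positive semidefinite. -/
/-! On a real vector `x`, the quadratic form of `Y + i(Ω - XΩXᵀ)` is `xᵀYx + i·xᵀ(Ω - XΩXᵀ)x`,
whose real part is `xᵀYx`; nonnegativity of the complex form therefore gives `xᵀYx ≥ 0`, and the
real part of the Hermitian condition gives the symmetry of `Y`. -/

open Matrix Complex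
open scoped ComplexOrder

namespace Matrix

variable {n : Type*}

lemma IsHermitian.of_map_ofReal_add_I_smul {A B : Matrix n n ℝ}
    (h : (A.map ofReal + I • B.map ofReal).IsHermitian) : A.IsHermitian := by
  ext i j
  simpa using congrArg re (congrFun₂ h i j)

variable [Fintype n]

lemma dotProduct_map_ofReal_mulVec (A : Matrix n n ℝ) (x : n → ℝ) :
    star (ofReal ∘ x) ⬝ᵥ A.map ofReal *ᵥ (ofReal ∘ x) = ((x ⬝ᵥ A *ᵥ x : ℝ) : ℂ) := by
  simp [dotProduct, mulVec, ofReal_sum, ofReal_mul]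

lemma PosSemidef.of_map_ofReal_add_I_smul {A B : Matrix n n ℝ}
    (h : (A.map ofReal + I • B.map ofReal).PosSemidef) : A.PosSemidef := by
  refine .of_dotProduct_mulVec_nonneg h.isHermitian.of_map_ofReal_add_I_smul fun x => ?_
  have hx := h.dotProduct_mulVec_nonneg (ofReal ∘ x)
  rw [add_mulVec, smul_mulVec, dotProduct_add, dotProduct_smul, dotProduct_map_ofReal_mulVec,
    dotProduct_map_ofReal_mulVec, smul_eq_mul] at hx
  simpa using (le_def.mp hx).1

end Matrix

theorem uncertainty_implies_Y_psd_general
    (X Y : Matrix (Fin 2) (Fin 2) ℝ)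
    (Ω : Matrix (Fin 2) (Fin 2) ℝ)
    (h : (Y.map (fun x : ℝ => (x : ℂ)) + Complex.I • Ω.map (fun x : ℝ => (x : ℂ))
          - Complex.I • (X * Ω * Xᵀ).map (fun x : ℝ => (x : ℂ))).PosSemidef) :
    Y.PosSemidef := by
  rw [add_sub_assoc, ← smul_sub, ← Matrix.map_sub _ ofReal_sub] at h
  exact h.of_map_ofReal_add_I_smul

theorem uncertainty_implies_Y_psd
    (X Y : Matrix (Fin 2) (Fin 2) ℝ) (hYsym : Y.IsSymm)
    (Ω : Matrix (Fin 2) (Fin 2) ℝ) (hΩ : Ω = !![0, 1; -1, 0])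
    (h : (Y.map (fun x : ℝ => (x : ℂ)) + Complex.I • Ω.map (fun x : ℝ => (x : ℂ))
          - Complex.I • (X * Ω * Xᵀ).map (fun x : ℝ => (x : ℂ))).PosSemidef) :
    Y.PosSemidef :=
  uncertainty_implies_Y_psd_general X Y Ω h
end

section
/- The classical CLT at the level of characteristic functions: if φ : ℝ → ℂ is the characteristic function of a centered real random variable with finite variance σ², then for every t ∈ ℝ, φ(t/√n)^n converges to exp(-σ²t²/2) as n → ∞. -/
/-!
A finite second moment makes `φ` of class `C²`, with Taylor expansion
`φ s = 1 - σ² s² / 2 + o(s²)` at `0` because the mean vanishes. Hence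
`φ (t / √n) = 1 - σ² t² / (2n) + o(1/n)`, and `(1 + z / n + o(1/n)) ^ n → exp z`.
-/

open MeasureTheory Filter Complex Topology Asymptotics

lemma taylor_charFun_two_of_integral_eq_zero {μ : Measure ℝ} [IsProbabilityMeasure μ]
    (hμ : MemLp id 2 μ) (h0 : ∫ x, x ∂μ = 0) :
    (fun t : ℝ ↦ charFun μ t - (1 - (∫ x, x ^ 2 ∂μ : ℝ) * t ^ 2 / 2)) =o[𝓝 0] fun t ↦ t ^ 2 := by
  refine (taylor_isLittleO_univ (x₀ := 0) (contDiff_charFun hμ)).congr (fun t ↦ ?_) (by simp)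
  rw [taylorWithinEval_charFun_zero hμ]
  simp only [Finset.sum_range_succ, Finset.range_one, Finset.sum_singleton, Nat.factorial_zero,
    Nat.factorial_one, Nat.factorial_two, Nat.cast_one, Nat.cast_ofNat, inv_one, pow_zero,
    pow_one, one_mul, mul_one, mul_pow, I_sq, integral_const, probReal_univ, smul_eq_mul,
    ofReal_one, h0, ofReal_zero, mul_zero, add_zero]
  ring

lemma tendsto_pow_exp_of_isLittleO_sub_one_sub_sq {f : ℝ → ℂ} {c : ℂ}
    (hf : (fun t : ℝ ↦ f t - (1 - c * t ^ 2 / 2)) =o[𝓝 0] fun t ↦ t ^ 2) (t : ℝ) :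
    Tendsto (fun n : ℕ ↦ f (t / √n) ^ n) atTop (𝓝 (exp (-(c * t ^ 2) / 2))) := by
  have hs : Tendsto (fun n : ℕ ↦ t / √n) atTop (𝓝 0) :=
    tendsto_const_nhds.div_atTop (Real.tendsto_sqrt_atTop.comp tendsto_natCast_atTop_atTop)
  have hsq : ∀ n : ℕ, (t / √n) ^ 2 = t ^ 2 / n := fun n ↦ by
    rw [div_pow, Real.sq_sqrt n.cast_nonneg]
  apply tendsto_pow_exp_of_isLittleO_sub_add_div
  have h := hf.comp_tendsto hs
  simp only [Function.comp_def, hsq] at h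
  refine (h.congr_left fun n ↦ ?_).trans_isBigO ?_
  · rw [← ofReal_pow, hsq]
    push_cast
    ring
  · refine IsBigO.of_bound (t ^ 2) (Eventually.of_forall fun n ↦ ?_)
    simp [div_eq_mul_inv]

theorem classical_clt_char_fun (μ : Measure ℝ) [IsProbabilityMeasure μ]
    (σ : ℝ)
    (hmean : ∫ x, x ∂μ = 0)
    (hint : Integrable (fun x => x^2) μ)
    (hvar : ∫ x, x^2 ∂μ = σ^2)
    (φ : ℝ → ℂ) (hφ : ∀ t : ℝ, φ t = ∫ x, Complex.exp ((t : ℂ) * (x : ℂ) * Complex.I) ∂μ) :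
    ∀ t : ℝ, Tendsto (fun n : ℕ => (φ (t / Real.sqrt n))^n) atTop
      (𝓝 (Complex.exp (-((σ^2 * t^2 : ℝ) : ℂ) / 2))) := by
  intro t
  obtain rfl : φ = charFun μ := funext fun s ↦ (hφ s).trans (charFun_apply_real s).symm
  have hμ : MemLp id 2 μ := (memLp_two_iff_integrable_sq aestronglyMeasurable_id).2 hint
  have h := tendsto_pow_exp_of_isLittleO_sub_one_sub_sq
    (taylor_charFun_two_of_integral_eq_zero hμ hmean) t
  rw [hvar] at h
  convert h using 3
  push_cast
  ring
end

section
/- If a Hilbert–Schmidt operator T on ℓ²(ℕ) satisfies ⟨α|T|α⟩ = 0 for all coherent vectors |α⟩, α ∈ ℂ, then T = 0. -/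
open scoped InnerProductSpace

noncomputable def coherent {H : Type*} [NormedAddCommGroup H] [InnerProductSpace ℂ H]
    (e : ℕ → H) (α : ℂ) : H :=
  ∑' k : ℕ, (Complex.exp (-(‖α‖^2 : ℝ) / 2) * α^k / (Real.sqrt (Nat.factorial k) : ℂ)) • e k

/-!
Expanding the coherent vectors in the basis, `⟪α, T α⟫ = e^{-|α|²} ∑ c_{jk} ᾱ^j α^k` with
`c_{jk} = ⟪b j, T (b k)⟫ / √(j! k!)`, an absolutely convergent series since the matrix entries
of `T` are bounded by `‖T‖`. Along the ray `α = x (1 + s i)`, `x > 0`, this is a power series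
in `x` whose `n`-th coefficient is the homogeneous polynomial
`∑_{j+k=n} c_{jk} (1 - s i)^j (1 + s i)^k`. A power series vanishing on `(0, ε)` has zero
coefficients, and a homogeneous polynomial vanishing at the infinitely many ratios
`(1 - s i) / (1 + s i)` is zero, so every `c_{jk}` vanishes.
-/

open scoped ComplexConjugate Nat
open Filter Topology Finset Complex

theorem Real.summable_pow_div_sqrt_factorial (r : ℝ) :
    Summable fun k : ℕ => r ^ k / √(k ! : ℝ) := by
  -- AM-GM: `|r| ^ k / √k! = √(a c) ≤ (a + c) / 2` with `a = (2 r²) ^ k / k!` and `c = 2⁻ᵏ`.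
  refine Summable.of_norm_bounded
    (((Real.summable_pow_div_factorial (2 * r ^ 2)).add summable_geometric_two).div_const 2)
    fun k => ?_
  set a := (2 * r ^ 2) ^ k / (k ! : ℝ)
  set c := (1 / 2 : ℝ) ^ k
  have hac : (r ^ k / √(k ! : ℝ)) ^ 2 = a * c := by
    rw [div_pow, Real.sq_sqrt (by positivity)]
    simp only [a, c, div_mul_eq_mul_div, ← mul_pow]
    ring
  rw [Real.norm_eq_abs, ← Real.sqrt_sq_eq_abs, hac, Real.sqrt_le_left (by positivity)]
  nlinarith [sq_nonneg (a - c)]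

theorem eq_zero_of_tsum_pow_smul_eq_zero {E : Type*} [NormedAddCommGroup E] [NormedSpace ℝ E]
    [CompleteSpace E] {d : ℕ → E} (hd : Summable (‖d ·‖))
    (h : ∀ᶠ x in 𝓝[>] (0 : ℝ), ∑' n, x ^ n • d n = 0) : d = 0 := by
  suffices ∀ m, d m = 0 from funext this
  intro m
  induction m using Nat.strong_induction_on with
  | _ m ih =>
  -- As `d i = 0` for `i < m`, the series is `x ^ m • ∑ x ^ n • d (n + m)`, and the latter sum
  -- tends to `d m` as `x → 0⁺` by dominated convergence.
  have hsmall : ∀ᶠ x in 𝓝[>] (0 : ℝ), x ∈ Set.Ioo 0 1 := Ioo_mem_nhdsGT one_pos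
  have hbound : ∀ᶠ x in 𝓝[>] (0 : ℝ), ∀ n k, ‖x ^ n • d k‖ ≤ ‖d k‖ := by
    filter_upwards [hsmall] with x hx n k
    rw [norm_smul, norm_pow, Real.norm_of_nonneg hx.1.le]
    exact mul_le_of_le_one_left (norm_nonneg _) (pow_le_one₀ hx.1.le hx.2.le)
  have hlim : Tendsto (fun x : ℝ => ∑' n, x ^ n • d (n + m)) (𝓝[>] 0) (𝓝 (d m)) := by
    have := tendsto_tsum_of_dominated_convergence (hd.comp_injective (add_left_injective m))
      (g := fun n => (0 : ℝ) ^ n • d (n + m))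
      (fun n => (((continuous_pow n).tendsto 0).mono_left nhdsWithin_le_nhds).smul_const _)
      (hbound.mono fun x hx n => hx n (n + m))
    rwa [tsum_eq_single 0 fun n hn => by simp [hn], pow_zero, one_smul, zero_add] at this
  have hzero : ∀ᶠ x in 𝓝[>] (0 : ℝ), ∑' n, x ^ n • d (n + m) = 0 := by
    filter_upwards [h, hsmall, hbound] with x hx hx01 hxb
    rw [← (Summable.of_norm_bounded hd fun n => hxb n n).sum_add_tsum_nat_add m,
      Finset.sum_eq_zero fun i hi => by rw [ih i (mem_range.1 hi), smul_zero], zero_add] at hx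
    simp_rw [pow_add, mul_comm _ (x ^ m), mul_smul, tsum_const_smul''] at hx
    exact (smul_eq_zero.1 hx).resolve_left (pow_ne_zero _ hx01.1.ne')
  exact tendsto_nhds_unique hlim (tendsto_const_nhds.congr' (hzero.mono fun x hx => hx.symm))

theorem HasSum.sum_antidiagonal {A G : Type*} [AddMonoid A] [HasAntidiagonal A]
    [AddCommMonoid G] [TopologicalSpace G] [ContinuousAdd G] [RegularSpace G]
    {f : A × A → G} {a : G} (hf : HasSum f a) :
    HasSum (fun n => ∑ p ∈ antidiagonal n, f p) a :=
  (HasAntidiagonal.sigmaAntidiagonalEquivProd.hasSum_iff.2 hf).sigma fun n =>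
    (antidiagonal n).hasSum f

open Polynomial in
theorem eq_zero_of_sum_antidiagonal_conj_pow_mul_pow_eq_zero {n : ℕ} {c : ℕ × ℕ → ℂ}
    (h : ∀ s : ℝ, ∑ p ∈ antidiagonal n, c p * conj (1 + s * I) ^ p.1 * (1 + s * I) ^ p.2 = 0) :
    ∀ p ∈ antidiagonal n, c p = 0 := by
  set q : ℂ[X] := ∑ k ∈ range (n + 1), C (c (k, n - k)) * X ^ k
  have hu : ∀ s : ℝ, (1 + s * I : ℂ) ≠ 0 := fun s hs => by simpa using congrArg re hs
  have hroot : ∀ s : ℝ, q.IsRoot (conj (1 + s * I) / (1 + s * I)) := by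
    intro s
    have hqs : (1 + s * I) ^ n * q.eval (conj (1 + s * I) / (1 + s * I)) =
        ∑ p ∈ antidiagonal n, c p * conj (1 + s * I) ^ p.1 * (1 + s * I) ^ p.2 := by
      rw [Nat.sum_antidiagonal_eq_sum_range_succ_mk, eval_finsetSum, mul_sum]
      refine sum_congr rfl fun k hk => ?_
      obtain ⟨j, rfl⟩ := Nat.exists_eq_add_of_le (Nat.lt_succ_iff.1 (mem_range.1 hk))
      simp only [eval_mul, eval_C, eval_pow, eval_X, div_pow, Nat.add_sub_cancel_left, pow_add]
      field_simp [hu s]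
    rw [h s] at hqs
    exact (mul_eq_zero.1 hqs).resolve_left (pow_ne_zero _ (hu s))
  have hinj : Function.Injective fun s : ℝ => conj (1 + s * I) / (1 + s * I) := by
    intro s t hst
    simp only at hst
    rw [div_eq_div_iff (hu s) (hu t)] at hst
    linarith [show t + -s = s + -t by simpa using congrArg im hst]
  have hq : q = 0 :=
    q.eq_zero_of_infinite_isRoot (Set.infinite_of_injective_forall_mem hinj hroot)
  intro p hp
  obtain ⟨k, j, rfl⟩ : ∃ k j, p = (k, j) := ⟨p.1, p.2, rfl⟩
  obtain rfl := HasAntidiagonal.mem_antidiagonal.1 hp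
  simpa [q, finsetSum_coeff, coeff_C_mul_X_pow] using congrArg (coeff · k) hq

theorem eq_zero_of_tsum_conj_pow_mul_pow_eq_zero {c : ℕ × ℕ → ℂ}
    (hc : ∀ α : ℂ, Summable fun p => ‖c p * conj α ^ p.1 * α ^ p.2‖)
    (h : ∀ α : ℂ, ∑' p, c p * conj α ^ p.1 * α ^ p.2 = 0) : c = 0 := by
  set D : ℝ → ℕ → ℂ := fun s n =>
    ∑ p ∈ antidiagonal n, c p * conj (1 + s * I) ^ p.1 * (1 + s * I) ^ p.2
  have hD : ∀ s, D s = 0 := by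
    intro s
    refine eq_zero_of_tsum_pow_smul_eq_zero ?_ (Eventually.of_forall fun x => ?_)
    · exact Summable.of_nonneg_of_le (fun _ => norm_nonneg _) (fun n => norm_sum_le _ _)
        (hc (1 + s * I)).hasSum.sum_antidiagonal.summable
    · have hx := (hc (x * (1 + s * I))).of_norm.hasSum.sum_antidiagonal
      rw [h] at hx
      refine (hx.congr_fun fun n => ?_).tsum_eq
      simp only [D, smul_sum]
      refine sum_congr rfl fun p hp => ?_
      rw [← HasAntidiagonal.mem_antidiagonal.1 hp]
      simp only [map_mul, conj_ofReal, mul_pow, pow_add, real_smul, ofReal_mul, ofReal_pow]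
      ring
  funext p
  exact eq_zero_of_sum_antidiagonal_conj_pow_mul_pow_eq_zero (fun s => congrFun (hD s) _) p
    (HasAntidiagonal.mem_antidiagonal.2 rfl)

namespace HilbertBasis

variable {ι 𝕜 E : Type*} [RCLike 𝕜] [NormedAddCommGroup E] [InnerProductSpace 𝕜 E]
  (b : HilbertBasis ι 𝕜 E)

theorem inner_tsum_smul {f : ι → 𝕜} (hf : Memℓp f 2) (i : ι) :
    ⟪b i, ∑' j, f j • b j⟫_𝕜 = f i := by
  rw [(b.hasSum_repr_symm ⟨f, hf⟩).tsum_eq, ← b.repr_apply_apply,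
    LinearIsometryEquiv.apply_symm_apply]

theorem norm_inner_apply_le (T : E →L[𝕜] E) (i j : ι) : ‖⟪b i, T (b j)⟫_𝕜‖ ≤ ‖T‖ :=
  calc ‖⟪b i, T (b j)⟫_𝕜‖ ≤ ‖b i‖ * ‖T (b j)‖ := norm_inner_le_norm _ _
    _ ≤ ‖b i‖ * (‖T‖ * ‖b j‖) := by gcongr; exact T.le_opNorm _
    _ = ‖T‖ := by simp [b.orthonormal.1]

theorem hasSum_conj_inner_mul_inner_apply_mul_inner (T : E →L[𝕜] E) {v : E}
    (hv : Summable fun i => ‖⟪b i, v⟫_𝕜‖) :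
    HasSum (fun p : ι × ι => conj ⟪b p.1, v⟫_𝕜 * ⟪b p.1, T (b p.2)⟫_𝕜 * ⟪b p.2, v⟫_𝕜)
      ⟪v, T v⟫_𝕜 := by
  have hsum : Summable fun p : ι × ι =>
      conj ⟪b p.1, v⟫_𝕜 * ⟪b p.1, T (b p.2)⟫_𝕜 * ⟪b p.2, v⟫_𝕜 := by
    refine .of_norm_bounded ((hv.mul_of_nonneg hv (fun _ => norm_nonneg _)
      (fun _ => norm_nonneg _)).mul_left ‖T‖) fun p => ?_
    rw [norm_mul, norm_mul, RCLike.norm_conj, mul_right_comm, mul_comm]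
    gcongr
    exact b.norm_inner_apply_le T p.1 p.2
  have hrow : ∀ i, HasSum (fun j => conj ⟪b i, v⟫_𝕜 * ⟪b i, T (b j)⟫_𝕜 * ⟪b j, v⟫_𝕜)
      (conj ⟪b i, v⟫_𝕜 * ⟪b i, T v⟫_𝕜) := by
    intro i
    have := (((b.hasSum_repr v).mapL T).mapL (innerSL 𝕜 (b i))).mul_left (conj ⟪b i, v⟫_𝕜)
    simp only [innerSL_apply_apply, map_smul, smul_eq_mul, b.repr_apply_apply] at this
    simpa only [mul_assoc, mul_comm ⟪b _, v⟫_𝕜] using this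
  have hdiag : HasSum (fun i => conj ⟪b i, v⟫_𝕜 * ⟪b i, T v⟫_𝕜) ⟪v, T v⟫_𝕜 := by
    simpa only [inner_conj_symm] using b.hasSum_inner_mul_inner v (T v)
  exact (hsum.hasSum.prod_fiberwise hrow).unique hdiag ▸ hsum.hasSum

theorem eq_zero_of_inner_apply_eq_zero {T : E →L[𝕜] E} (h : ∀ i j, ⟪b i, T (b j)⟫_𝕜 = 0) :
    T = 0 := by
  refine ContinuousLinearMap.ext_on (s := Set.range b)
    (Submodule.dense_iff_topologicalClosure_eq_top.2 b.dense_span) ?_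
  rintro _ ⟨j, rfl⟩
  refine b.repr.injective (lp.ext (funext fun i => ?_))
  simp [b.repr_apply_apply, h]

end HilbertBasis

theorem summable_norm_mul_conj_pow_mul_pow {c : ℕ × ℕ → ℂ} {M : ℝ}
    (hc : ∀ p, ‖c p‖ ≤ M / (√(p.1 ! : ℝ) * √(p.2 ! : ℝ))) (α : ℂ) :
    Summable fun p => ‖c p * conj α ^ p.1 * α ^ p.2‖ := by
  have h := Real.summable_pow_div_sqrt_factorial ‖α‖
  have hnn : ∀ k : ℕ, 0 ≤ ‖α‖ ^ k / √(k ! : ℝ) := fun k => by positivity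
  refine .of_nonneg_of_le (fun _ => norm_nonneg _) (fun p => ?_)
    ((h.mul_of_nonneg h hnn hnn).mul_left M)
  calc ‖c p * conj α ^ p.1 * α ^ p.2‖ = ‖c p‖ * (‖α‖ ^ p.1 * ‖α‖ ^ p.2) := by
        simp [mul_assoc]
    _ ≤ M / (√(p.1 ! : ℝ) * √(p.2 ! : ℝ)) * (‖α‖ ^ p.1 * ‖α‖ ^ p.2) := by gcongr; exact hc p
    _ = M * (‖α‖ ^ p.1 / √(p.1 ! : ℝ) * (‖α‖ ^ p.2 / √(p.2 ! : ℝ))) := by ring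

noncomputable def coherentCoeff (α : ℂ) (k : ℕ) : ℂ :=
  Complex.exp (-(‖α‖ ^ 2 : ℝ) / 2) * α ^ k / (√(k ! : ℝ) : ℂ)

theorem summable_norm_coherentCoeff (α : ℂ) : Summable fun k => ‖coherentCoeff α k‖ := by
  refine ((Real.summable_pow_div_sqrt_factorial ‖α‖).mul_left
    ‖Complex.exp (-(‖α‖ ^ 2 : ℝ) / 2)‖).congr fun k => ?_
  simp [coherentCoeff, mul_div_assoc, abs_of_nonneg (Real.sqrt_nonneg _)]

theorem HilbertBasis.inner_coherent {H : Type*} [NormedAddCommGroup H] [InnerProductSpace ℂ H]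
    (b : HilbertBasis ℕ ℂ H) (α : ℂ) (j : ℕ) : ⟪b j, coherent b α⟫_ℂ = coherentCoeff α j := by
  refine b.inner_tsum_smul (f := coherentCoeff α)
    (Memℓp.of_exponent_ge (memℓp_gen ?_) one_le_two) j
  simpa only [ENNReal.toReal_one, Real.rpow_one] using summable_norm_coherentCoeff α

theorem husimi_vanishing_implies_zero_general {H : Type*} [NormedAddCommGroup H]
    [InnerProductSpace ℂ H] (b : HilbertBasis ℕ ℂ H)
    (T : H →L[ℂ] H)
    (h : ∀ α : ℂ, ⟪coherent (fun k => b k) α, T (coherent (fun k => b k) α)⟫_ℂ = 0) :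
    T = 0 := by
  set c : ℕ × ℕ → ℂ := fun p => ⟪b p.1, T (b p.2)⟫_ℂ / (√(p.1 ! : ℝ) * √(p.2 ! : ℝ) : ℝ)
  have hc_le : ∀ p, ‖c p‖ ≤ ‖T‖ / (√(p.1 ! : ℝ) * √(p.2 ! : ℝ)) := fun p => by
    rw [norm_div, Complex.norm_real, Real.norm_of_nonneg (by positivity)]
    gcongr
    exact b.norm_inner_apply_le T p.1 p.2
  have hc : c = 0 := by
    refine eq_zero_of_tsum_conj_pow_mul_pow_eq_zero (summable_norm_mul_conj_pow_mul_pow hc_le)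
      fun α => ?_
    have hsum := b.hasSum_conj_inner_mul_inner_apply_mul_inner T (v := coherent b α)
      (by simpa only [b.inner_coherent] using summable_norm_coherentCoeff α)
    set e := Complex.exp (-(‖α‖ ^ 2 : ℝ) / 2) with he
    have hterm : ∀ p : ℕ × ℕ, conj (coherentCoeff α p.1) * ⟪b p.1, T (b p.2)⟫_ℂ *
        coherentCoeff α p.2 = conj e * e * (c p * conj α ^ p.1 * α ^ p.2) := fun p => by
      simp only [coherentCoeff, ← he, c, map_div₀, map_mul, map_pow, Complex.conj_ofReal,
        Complex.ofReal_mul]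
      ring
    simp only [b.inner_coherent, hterm] at hsum
    have := hsum.tsum_eq.trans (h α)
    rw [tsum_mul_left] at this
    exact (mul_eq_zero.1 this).resolve_left (by simp [e, Complex.exp_ne_zero])
  refine b.eq_zero_of_inner_apply_eq_zero fun j k => ?_
  simpa [c, Nat.factorial_ne_zero] using congrFun hc (j, k)

theorem husimi_vanishing_implies_zero {H : Type*} [NormedAddCommGroup H]
    [InnerProductSpace ℂ H] [CompleteSpace H] (b : HilbertBasis ℕ ℂ H)
    (T : H →L[ℂ] H) (hHS : Summable (fun k : ℕ => ‖T (b k)‖^2))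
    (h : ∀ α : ℂ, ⟪coherent (fun k => b k) α, T (coherent (fun k => b k) α)⟫_ℂ = 0) :
    T = 0 :=
  husimi_vanishing_implies_zero_general b T h
end

section
/- Comparison of dephasing and pure-loss quantum capacities can fail: there exists a probability density p on [0, 2π) such that log(2π) − h(p) < max{0, log(λ/(1−λ))}, where √λ = |∫₀^{2π} e^{iθ} p(θ) dθ| and h(p) = −∫₀^{2π} p log p is the differential entropy; e.g. for a sufficiently peaked density this strict inequality holds. -/
/-! The uniform density on `(0, 1]` works: it has differential entropy `0` and
`λ = |e^{i} - 1|² = 2 - 2 cos 1 ≈ 0.92`, so `λ / (1 - λ) ≈ 11.4` exceeds `2π`. -/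

open MeasureTheory Real intervalIntegral

open Set in
theorem intervalIntegral_indicator_Ioc {E : Type*} [NormedAddCommGroup E] [NormedSpace ℝ E]
    {a b c : ℝ} (hab : a ≤ b) (hbc : b ≤ c) (f : ℝ → E) :
    ∫ x in a..c, (Ioc a b).indicator f x = ∫ x in a..b, f x := by
  rw [integral_of_le (hab.trans hbc), integral_of_le hab,
    setIntegral_indicator measurableSet_Ioc, inter_eq_right.2 (Ioc_subset_Ioc_right hbc)]

theorem norm_integral_exp_mul_I_sq (t : ℝ) :
    ‖∫ θ in (0:ℝ)..t, Complex.exp (θ * Complex.I)‖ ^ 2 = 2 - 2 * cos t := by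
  simp_rw [mul_comm _ Complex.I]
  rw [integral_exp_mul_complex Complex.I_ne_zero, norm_div, Complex.norm_I, div_one,
    Complex.ofReal_zero, mul_zero, Complex.exp_zero, Complex.norm_exp_I_mul_ofReal_sub_one]
  simp only [norm_mul, mul_pow, Real.norm_eq_abs, sq_abs]
  have h : cos t = 2 * cos (t / 2) ^ 2 - 1 := by rw [← cos_two_mul]; ring_nf
  linarith [sin_sq_add_cos_sq (t / 2)]

theorem half_lt_cos_one : (1 : ℝ) / 2 < cos 1 := by
  have h := cos_lt_cos_of_nonneg_of_le_pi (x := 1) (y := π / 3)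
    (by norm_num) (by linarith [pi_gt_three]) (by linarith [pi_gt_three])
  rwa [cos_pi_div_three] at h

theorem cos_one_le_fifty_three_div_ninety_six : cos 1 ≤ 53 / 96 := by
  have h := cos_bound (x := 1) (by norm_num)
  rw [abs_le] at h
  norm_num at h ⊢
  linarith [h.2]

theorem two_mul_pi_lt_odds_cos_one :
    2 * π < (2 - 2 * cos 1) / (1 - (2 - 2 * cos 1)) := by
  have hc := cos_one_le_fifty_three_div_ninety_six
  rw [lt_div_iff₀ (by linarith [half_lt_cos_one])]
  linarith [mul_le_mul_of_nonneg_left hc pi_pos.le, pi_lt_d2]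

theorem dephasing_vs_pure_loss_capacity :
    ∃ p : ℝ → ℝ,
      (∀ θ : ℝ, 0 ≤ p θ) ∧
      (∫ θ in (0:ℝ)..(2 * π), p θ) = 1 ∧
      (1 : ℝ) / 2 < ‖∫ θ in (0:ℝ)..(2 * π), Complex.exp (θ * Complex.I) * (p θ : ℂ)‖^2 ∧
      Real.log (2 * π) - (-∫ θ in (0:ℝ)..(2 * π), p θ * Real.log (p θ)) <
        Real.log ((‖∫ θ in (0:ℝ)..(2 * π), Complex.exp (θ * Complex.I) * (p θ : ℂ)‖^2) /
          (1 - ‖∫ θ in (0:ℝ)..(2 * π), Complex.exp (θ * Complex.I) * (p θ : ℂ)‖^2)) := by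
  set p : ℝ → ℝ := (Set.Ioc 0 1).indicator 1
  have one_le_two_pi : (1 : ℝ) ≤ 2 * π := by linarith [pi_gt_three]
  have mass : ∫ θ in (0:ℝ)..(2 * π), p θ = 1 := by
    simp [p, intervalIntegral_indicator_Ioc zero_le_one one_le_two_pi]
  have fourier : ‖∫ θ in (0:ℝ)..(2 * π), Complex.exp (θ * Complex.I) * (p θ : ℂ)‖ ^ 2
      = 2 - 2 * cos 1 := by
    have : (fun θ : ℝ ↦ Complex.exp (θ * Complex.I) * (p θ : ℂ))
        = (Set.Ioc (0:ℝ) 1).indicator fun θ ↦ Complex.exp (θ * Complex.I) := by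
      ext θ; by_cases h : θ ∈ Set.Ioc (0:ℝ) 1 <;> simp [p, h]
    rw [this, intervalIntegral_indicator_Ioc zero_le_one one_le_two_pi,
      norm_integral_exp_mul_I_sq]
  have entropy : ∫ θ in (0:ℝ)..(2 * π), p θ * log (p θ) = 0 := by
    have : ∀ θ, p θ * log (p θ) = 0 := by
      intro θ; by_cases h : θ ∈ Set.Ioc (0:ℝ) 1 <;> simp [p, h]
    simp [this]
  refine ⟨p, Set.indicator_nonneg fun _ _ ↦ zero_le_one, mass, ?_, ?_⟩
  · rw [fourier]; linarith [cos_one_le_fifty_three_div_ninety_six]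
  · rw [fourier, entropy, neg_zero, sub_zero]
    exact log_lt_log (by positivity) two_mul_pi_lt_odds_cos_one
end

section
/- For p uniform on [0, ε) with 0 < ε < 2π: the dephasing capacity equals log(2π/ε), while λ = (sin(ε/2)/(ε/2))² satisfies log(λ/(1−λ)) → ∞ faster; precisely, log(λ/(1−λ)) − log(2π/ε) → ∞ as ε → 0⁺. -/
/-!
With `x = ε / 2` we have `λ = sinc x ^ 2`, and `sinc x > 1 - x ^ 2 / 6` gives `1 - λ ≤ x ^ 2 / 3`,
hence `λ / (1 - λ) ≥ x⁻² = 4 / ε ^ 2`. Against `2π / ε = π / x` this leaves a gap of at least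
`log (π x)⁻¹`, which tends to `∞`.
-/

open Filter Topology Real

namespace Real

lemma sinc_lt_one {x : ℝ} (hx : x ≠ 0) : sinc x < 1 := by
  rw [sinc_of_ne_zero hx]
  calc sin x / x ≤ |sin x / x| := le_abs_self _
    _ < 1 := by rw [abs_div, div_lt_one (abs_pos.2 hx)]; exact abs_sin_lt_abs hx

lemma one_sub_sq_div_six_lt_sinc {x : ℝ} (hx : x ≠ 0) : 1 - x ^ 2 / 6 < sinc x := by
  wlog hx₀ : 0 < x generalizing x
  · simpa [sinc_neg] using this (neg_ne_zero.2 hx) (by grind)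
  rw [sinc_of_ne_zero hx, lt_div_iff₀ hx₀]
  linarith [sin_gt_sub_cube hx₀]

lemma one_sub_sinc_sq_le {x : ℝ} (hx : x ≠ 0) (hx6 : x ^ 2 ≤ 6) :
    1 - sinc x ^ 2 ≤ x ^ 2 / 3 := by
  have h := one_sub_sq_div_six_lt_sinc hx
  nlinarith [pow_le_pow_left₀ (by linarith) h.le 2]

lemma inv_sq_le_sinc_sq_div_one_sub_sinc_sq {x : ℝ} (hx : x ≠ 0) (hx2 : x ^ 2 ≤ 2) :
    (x ^ 2)⁻¹ ≤ sinc x ^ 2 / (1 - sinc x ^ 2) := by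
  have hpos : 0 < 1 - sinc x ^ 2 := by
    nlinarith [sinc_lt_one hx, one_sub_sq_div_six_lt_sinc hx]
  have hsq : 0 < x ^ 2 := by positivity
  calc (x ^ 2)⁻¹ ≤ 3 / x ^ 2 - 1 := by
        rw [le_sub_iff_add_le, inv_eq_one_div, div_add_one hsq.ne']
        gcongr
        linarith
    _ ≤ 1 / (1 - sinc x ^ 2) - 1 := by
        rw [← one_div_div]
        gcongr
        exact one_sub_sinc_sq_le hx (by linarith)
    _ = sinc x ^ 2 / (1 - sinc x ^ 2) := by field_simp; ring

lemma two_mul_sin_half_div_eq_sinc_half {ε : ℝ} (hε : ε ≠ 0) :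
    2 * sin (ε / 2) / ε = sinc (ε / 2) := by
  rw [sinc_of_ne_zero (by positivity), div_div_eq_mul_div, mul_comm]

lemma log_inv_pi_mul_le_log_sinc_sq_div_one_sub_sinc_sq_sub_log {x : ℝ} (hx : x ≠ 0)
    (hx2 : x ^ 2 ≤ 2) :
    log (π * x)⁻¹ ≤ log (sinc x ^ 2 / (1 - sinc x ^ 2)) - log (π / x) := by
  have hlog := log_le_log (by positivity) (inv_sq_le_sinc_sq_div_one_sub_sinc_sq hx hx2)
  rw [log_inv, log_pow] at hlog
  rw [log_inv, log_mul pi_ne_zero hx, log_div pi_ne_zero hx]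
  push_cast at hlog
  linarith

end Real

theorem uniform_dephasing_gap_diverges :
    Tendsto (fun ε : ℝ =>
        Real.log (((2 * Real.sin (ε / 2) / ε)^2) / (1 - (2 * Real.sin (ε / 2) / ε)^2))
          - Real.log (2 * π / ε))
      (𝓝[>] (0 : ℝ)) atTop := by
  have h_lower : Tendsto (fun ε : ℝ => log ((π / 2)⁻¹ * ε⁻¹)) (𝓝[>] 0) atTop :=
    tendsto_log_atTop.comp (tendsto_inv_nhdsGT_zero.const_mul_atTop (by positivity))
  refine tendsto_atTop_mono' _ ?_ h_lower
  filter_upwards [Ioo_mem_nhdsGT (by norm_num : (0 : ℝ) < 2)] with ε ⟨hε₀, hε₂⟩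
  rw [two_mul_sin_half_div_eq_sinc_half hε₀.ne', show 2 * π / ε = π / (ε / 2) by field_simp,
    show (π / 2)⁻¹ * ε⁻¹ = (π * (ε / 2))⁻¹ by ring]
  exact log_inv_pi_mul_le_log_sinc_sq_div_one_sub_sinc_sq_sub_log (by positivity) (by nlinarith)
end
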